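/- arXiv:2312.08226 — 9 statements merged into one kernel-verified Lean document; each statement's English description precedes it below -/
import Mathlib

section
/- Let G be a simple graph, u, v vertices of G, and let G' = G[u→v] be the graph obtained by the Kelmans operation (removing all edges from u to vertices in N(u) \ N[v] and adding edges from v to those vertices). Then for any real p ≥ 2, the degree power sum ∑_{w ∈ V(G)} (deg_{G'} w)^p is at least ∑_{w ∈ V(G)} (deg_G w)^p. -/
/-!
Only the degrees of `u` and `v` change: every other vertex either keeps its neighbourhood or
trades its neighbour `u` for `v`. Writing `deg'` for degrees in `G[u → v]`, the two degrees
keep their sum and `deg' u ≤ deg u ≤ deg' v` (the transposition `(u v)` embeds `N(u)` into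
`N'(v)`), so the pair `(deg u, deg v)` is obtained from `(deg' u, deg' v)` by moving both
entries inwards; convexity of `x ↦ x ^ p` then finishes the proof.
-/

/-- The Kelmans operation `G[u → v]`: every edge `wu` with `w ∈ N(u) \\ N[v]` is removed
and replaced by the edge `wv`. -/
def kelmans {V : Type*} (G : SimpleGraph V) (u v : V) : SimpleGraph V where
  Adj x y := x ≠ y ∧
    ((G.Adj x y ∧ ¬ ((x = u ∧ G.Adj u y ∧ ¬ G.Adj v y ∧ y ≠ v) ∨
                     (y = u ∧ G.Adj u x ∧ ¬ G.Adj v x ∧ x ≠ v))) ∨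
     ((x = v ∧ G.Adj u y ∧ ¬ G.Adj v y ∧ y ≠ v) ∨
      (y = v ∧ G.Adj u x ∧ ¬ G.Adj v x ∧ x ≠ v)))
  symm := by
    constructor
    rintro x y ⟨hxy, h⟩
    refine ⟨hxy.symm, ?_⟩
    have hsymm : G.Adj x y ↔ G.Adj y x := ⟨SimpleGraph.Adj.symm, SimpleGraph.Adj.symm⟩
    tauto
  loopless := by constructor; rintro x ⟨h, -⟩; exact h rfl

theorem ConvexOn.add_le_add_of_mem_Icc {𝕜 β : Type*} [Field 𝕜] [LinearOrder 𝕜]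
    [IsStrictOrderedRing 𝕜] [AddCommGroup β] [PartialOrder β] [IsOrderedAddMonoid β]
    [Module 𝕜 β] {s : Set 𝕜} {f : 𝕜 → β} (hf : ConvexOn 𝕜 s f) {a b c d : 𝕜}
    (hc : c ∈ s) (hd : d ∈ s) (hca : c ≤ a) (had : a ≤ d) (hsum : a + b = c + d) :
    f a + f b ≤ f c + f d := by
  rcases had.eq_or_lt with rfl | had'
  · obtain rfl : b = c := by linarith
    rw [add_comm]
  have hcd : 0 < d - c := by linarith
  set t := (d - a) / (d - c)
  have ht : t * (d - c) = d - a := div_mul_cancel₀ _ hcd.ne'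
  have ht0 : 0 ≤ t := div_nonneg (by linarith) hcd.le
  have ht1 : t ≤ 1 := (div_le_one hcd).mpr (by linarith)
  have ha : t • c + (1 - t) • d = a := by simp only [smul_eq_mul]; linear_combination -ht
  have hb : (1 - t) • c + t • d = b := by simp only [smul_eq_mul]; linear_combination ht - hsum
  calc f a + f b ≤ (t • f c + (1 - t) • f d) + ((1 - t) • f c + t • f d) := by
        rw [← ha, ← hb]
        exact add_le_add (hf.2 hc hd ht0 (by linarith) (by ring))
          (hf.2 hc hd (by linarith) ht0 (by ring))
    _ = f c + f d := by module

namespace SimpleGraph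

variable {V : Type*} (G : SimpleGraph V) {u v w : V}

theorem kelmans_self : kelmans G u u = G := by
  ext x y
  simp only [kelmans]
  grind [Adj.ne]

theorem neighborSet_kelmans_left :
    (kelmans G u v).neighborSet u = G.neighborSet u ∩ insert v (G.neighborSet v) := by
  ext y
  simp only [mem_neighborSet, kelmans, Set.mem_inter_iff, Set.mem_insert_iff]
  grind [G.adj_comm, G.irrefl, Adj.ne]

theorem neighborSet_kelmans_right :
    (kelmans G u v).neighborSet v =
      G.neighborSet v ∪ (G.neighborSet u \ insert v (G.neighborSet v)) := by
  ext y
  simp only [mem_neighborSet, kelmans, Set.mem_union, Set.mem_sdiff, Set.mem_insert_iff]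
  grind [G.adj_comm, G.irrefl, Adj.ne]

theorem neighborSet_kelmans_of_mem [DecidableEq V]
    (hw : w ∈ G.neighborSet u \ insert v (G.neighborSet v)) :
    (kelmans G u v).neighborSet w = Equiv.swap u v '' G.neighborSet w := by
  ext y
  simp only [Set.mem_sdiff, Set.mem_insert_iff, mem_neighborSet] at hw
  rw [Equiv.image_eq_preimage_symm, Equiv.symm_swap]
  simp only [mem_neighborSet, kelmans, Set.mem_preimage, Equiv.swap_apply_def]
  split_ifs <;> grind [G.adj_comm, G.irrefl, Adj.ne]

theorem neighborSet_kelmans_of_notMem (hw : w ∉ G.neighborSet u \ insert v (G.neighborSet v))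
    (hwu : w ≠ u) (hwv : w ≠ v) : (kelmans G u v).neighborSet w = G.neighborSet w := by
  ext y
  simp only [Set.mem_sdiff, Set.mem_insert_iff, mem_neighborSet] at hw
  simp only [mem_neighborSet, kelmans]
  grind [G.adj_comm, G.irrefl, Adj.ne]

theorem ncard_neighborSet_kelmans_of_ne (hwu : w ≠ u) (hwv : w ≠ v) :
    ((kelmans G u v).neighborSet w).ncard = (G.neighborSet w).ncard := by
  classical
  by_cases hw : w ∈ G.neighborSet u \ insert v (G.neighborSet v)
  · rw [G.neighborSet_kelmans_of_mem hw, Set.ncard_image_of_injective _ (Equiv.injective _)]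
  · rw [G.neighborSet_kelmans_of_notMem hw hwu hwv]

variable [Finite V] (u v)

theorem ncard_neighborSet_kelmans_left_le :
    ((kelmans G u v).neighborSet u).ncard ≤ (G.neighborSet u).ncard := by
  rw [neighborSet_kelmans_left]
  exact Set.ncard_le_ncard Set.inter_subset_left

theorem ncard_neighborSet_le_kelmans_right :
    (G.neighborSet u).ncard ≤ ((kelmans G u v).neighborSet v).ncard := by
  classical
  refine Set.ncard_le_ncard_of_injOn (Equiv.swap u v) (fun w hw => ?_) (Equiv.injective _).injOn
  rw [neighborSet_kelmans_right]
  simp only [mem_neighborSet] at hw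
  simp only [Set.mem_union, Set.mem_sdiff, Set.mem_insert_iff, mem_neighborSet,
    Equiv.swap_apply_def]
  split_ifs <;> grind [G.adj_comm, G.irrefl, Adj.ne]

theorem ncard_neighborSet_kelmans_add :
    ((kelmans G u v).neighborSet u).ncard + ((kelmans G u v).neighborSet v).ncard =
      (G.neighborSet u).ncard + (G.neighborSet v).ncard := by
  have hdisj : Disjoint (G.neighborSet v) (G.neighborSet u \ insert v (G.neighborSet v)) :=
    Set.disjoint_sdiff_right.mono_right (Set.sdiff_subset_sdiff_right (Set.subset_insert _ _))
  rw [neighborSet_kelmans_left, neighborSet_kelmans_right, Set.ncard_union_eq hdisj,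
    ← Set.ncard_inter_add_ncard_sdiff_eq_ncard (G.neighborSet u) (insert v (G.neighborSet v))]
  ring

end SimpleGraph

/-- The degree power sum (with real exponent `p ≥ 2`) does not decrease
under the Kelmans operation. -/
theorem stmt_1 {V : Type*} [Fintype V] (G : SimpleGraph V) (u v : V) (p : ℝ) (hp : 2 ≤ p) :
    ∑ w : V, ((G.neighborSet w).ncard : ℝ) ^ p ≤
      ∑ w : V, (((kelmans G u v).neighborSet w).ncard : ℝ) ^ p := by
  classical
  rcases eq_or_ne u v with rfl | huv
  · rw [G.kelmans_self]
  rw [← Finset.sum_compl_add_sum {u, v}, ← Finset.sum_compl_add_sum {u, v},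
    Finset.sum_pair huv, Finset.sum_pair huv]
  gcongr ?_ + ?_
  · refine (Finset.sum_congr rfl fun w hw => ?_).le
    simp only [Finset.mem_compl, Finset.mem_insert, Finset.mem_singleton, not_or] at hw
    rw [G.ncard_neighborSet_kelmans_of_ne hw.1 hw.2]
  · refine (convexOn_rpow (by linarith)).add_le_add_of_mem_Icc
      (Set.mem_Ici.mpr (Nat.cast_nonneg _)) (Set.mem_Ici.mpr (Nat.cast_nonneg _))
      (by exact_mod_cast G.ncard_neighborSet_kelmans_left_le u v)
      (by exact_mod_cast G.ncard_neighborSet_le_kelmans_right u v) ?_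
    exact_mod_cast (G.ncard_neighborSet_kelmans_add u v).symm
end

section
/- Let G be a simple graph, u, v vertices of G, and G' = G[u→v] the graph obtained by the Kelmans operation. For every integer s ≥ 1, the number of s-cliques of G' is at least the number of s-cliques of G. -/
section

variable {V : Type*} {G : SimpleGraph V} {u v : V}

theorem kelmans_adj_of_adj {x y : V} (h : G.Adj x y) (hx : x ≠ u) (hy : y ≠ u) :
    (kelmans G u v).Adj x y :=
  ⟨h.ne, Or.inl ⟨h, by tauto⟩⟩

theorem kelmans_adj_target_of_adj (huv : u ≠ v) {z : V} (hzv : z ≠ v) (h : G.Adj u z) :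
    (kelmans G u v).Adj v z := by
  by_cases hvz : G.Adj v z
  · exact ⟨hzv.symm, Or.inl ⟨hvz, by rintro (⟨rfl, -⟩ | ⟨-, -, -, hvv⟩) <;> tauto⟩⟩
  · exact ⟨hzv.symm, Or.inr (Or.inl ⟨rfl, h, hvz, hzv⟩)⟩

theorem exists_lost_edge_of_not_isClique_kelmans {s : Set V} (hs : G.IsClique s)
    (hs' : ¬ (kelmans G u v).IsClique s) :
    u ∈ s ∧ ∃ w ∈ s, G.Adj u w ∧ ¬ G.Adj v w ∧ w ≠ v := by
  obtain ⟨x, hx, y, hy, hxy, hnadj⟩ : ∃ x ∈ s, ∃ y ∈ s, x ≠ y ∧ ¬ (kelmans G u v).Adj x y := by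
    simpa [SimpleGraph.IsClique, Set.Pairwise] using hs'
  have hlost : (x = u ∧ G.Adj u y ∧ ¬ G.Adj v y ∧ y ≠ v) ∨
      (y = u ∧ G.Adj u x ∧ ¬ G.Adj v x ∧ x ≠ v) := by
    by_contra hkept
    exact hnadj ⟨hxy, Or.inl ⟨hs hx hy hxy, hkept⟩⟩
  rcases hlost with ⟨rfl, h⟩ | ⟨rfl, h⟩
  · exact ⟨hx, y, hy, h⟩
  · exact ⟨hy, x, hx, h⟩

theorem lost_vertices_of_not_isClique_kelmans {K : Finset V} (hK : G.IsClique (K : Set V))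
    (hK' : ¬ (kelmans G u v).IsClique (K : Set V)) :
    u ∈ K ∧ v ∉ K ∧ ∃ w ∈ K, w ≠ u ∧ w ≠ v ∧ ¬ G.Adj v w := by
  obtain ⟨hu, w, hw, huw, hvw, hwv⟩ := exists_lost_edge_of_not_isClique_kelmans hK hK'
  exact ⟨hu, fun hv => hvw (hK hv hw hwv.symm), w, hw, huw.ne', hwv, hvw⟩

variable [DecidableEq V]

theorem isClique_kelmans_insert_erase {K : Finset V} (hK : G.IsClique (K : Set V))
    (hu : u ∈ K) (hv : v ∉ K) :
    (kelmans G u v).IsClique (insert v (K.erase u) : Finset V) := by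
  have huv : u ≠ v := by rintro rfl; exact hv hu
  have hvz : ∀ z ∈ K, z ≠ u → (kelmans G u v).Adj v z := fun z hz hzu =>
    kelmans_adj_target_of_adj huv (by rintro rfl; exact hv hz) (hK hu hz hzu.symm)
  intro x hx y hy hxy
  simp only [Finset.coe_insert, Finset.coe_erase, Set.mem_insert_iff, Set.mem_sdiff,
    Finset.mem_coe, Set.mem_singleton_iff] at hx hy
  rcases hx with rfl | ⟨hxK, hxu⟩ <;> rcases hy with rfl | ⟨hyK, hyu⟩
  · exact absurd rfl hxy
  · exact hvz y hyK hyu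
  · exact (hvz x hxK hxu).symm
  · exact kelmans_adj_of_adj (hK hxK hyK hxy) hxu hyu

theorem not_isClique_insert_erase {K : Finset V} {w : V} (hw : w ∈ K) (hwu : w ≠ u)
    (hwv : w ≠ v) (hvw : ¬ G.Adj v w) :
    ¬ G.IsClique (insert v (K.erase u) : Finset V) := fun h =>
  hvw (h (by simp) (by simp [hw, hwu]) hwv.symm)

theorem injOn_insert_erase :
    Set.InjOn (fun K : Finset V => insert v (K.erase u)) {K | u ∈ K ∧ v ∉ K} := by
  have hrecover : ∀ K : Finset V, u ∈ K → v ∉ K → insert u ((insert v (K.erase u)).erase v) = K :=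
    fun K hu hv => by
      rw [Finset.erase_insert (fun h => hv (Finset.mem_of_mem_erase h)), Finset.insert_erase hu]
  intro K₁ ⟨hu₁, hv₁⟩ K₂ ⟨hu₂, hv₂⟩ h
  rw [← hrecover K₁ hu₁ hv₁, ← hrecover K₂ hu₂ hv₂]
  exact congrArg (fun t => insert u (t.erase v)) h

variable (G u v)

open Classical in
noncomputable def kelmansCliqueShift (K : Finset V) : Finset V :=
  if (kelmans G u v).IsClique (K : Set V) then K else insert v (K.erase u)

variable {G u v}

theorem isNClique_kelmans_kelmansCliqueShift {s : ℕ} {K : Finset V} (hK : G.IsNClique s K) :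
    (kelmans G u v).IsNClique s (kelmansCliqueShift G u v K) := by
  unfold kelmansCliqueShift
  split_ifs with hsurvives
  · exact ⟨hsurvives, hK.card_eq⟩
  obtain ⟨hu, hv, -⟩ := lost_vertices_of_not_isClique_kelmans hK.isClique hsurvives
  refine ⟨isClique_kelmans_insert_erase hK.isClique hu hv, ?_⟩
  rw [Finset.card_insert_of_notMem (fun h => hv (Finset.mem_of_mem_erase h)),
    Finset.card_erase_add_one hu, hK.card_eq]

theorem isClique_kelmansCliqueShift_iff {K : Finset V} (hK : G.IsClique (K : Set V)) :
    G.IsClique (kelmansCliqueShift G u v K : Set V) ↔ (kelmans G u v).IsClique (K : Set V) := by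
  unfold kelmansCliqueShift
  split_ifs with hsurvives
  · exact iff_of_true hK hsurvives
  obtain ⟨-, -, w, hw, hwu, hwv, hvw⟩ := lost_vertices_of_not_isClique_kelmans hK hsurvives
  exact iff_of_false (not_isClique_insert_erase hw hwu hwv hvw) hsurvives

theorem injOn_kelmansCliqueShift :
    Set.InjOn (kelmansCliqueShift G u v) {K | G.IsClique (K : Set V)} := by
  intro K₁ hK₁ K₂ hK₂ h
  have hsame : (kelmans G u v).IsClique (K₁ : Set V) ↔ (kelmans G u v).IsClique (K₂ : Set V) := by
    rw [← isClique_kelmansCliqueShift_iff hK₁, ← isClique_kelmansCliqueShift_iff hK₂, h]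
  by_cases h₁ : (kelmans G u v).IsClique (K₁ : Set V)
  · simpa [kelmansCliqueShift, h₁, hsame.mp h₁] using h
  · obtain ⟨hu₁, hv₁, -⟩ := lost_vertices_of_not_isClique_kelmans hK₁ h₁
    obtain ⟨hu₂, hv₂, -⟩ := lost_vertices_of_not_isClique_kelmans hK₂ (hsame.not.mp h₁)
    refine injOn_insert_erase ⟨hu₁, hv₁⟩ ⟨hu₂, hv₂⟩ ?_
    simpa [kelmansCliqueShift, h₁, hsame.not.mp h₁] using h

end

theorem stmt_3_general {V : Type*} [Fintype V] (G : SimpleGraph V) (u v : V) (s : ℕ) :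
    {t : Finset V | G.IsNClique s t}.ncard ≤
      {t : Finset V | (kelmans G u v).IsNClique s t}.ncard := by
  classical
  exact Set.ncard_le_ncard_of_injOn _ (fun _ => isNClique_kelmans_kelmansCliqueShift)
    (injOn_kelmansCliqueShift.mono fun _ hK => hK.isClique)

/-- The number of `s`-cliques does not decrease under the Kelmans operation. -/
theorem stmt_3 {V : Type*} [Fintype V] (G : SimpleGraph V) (u v : V) (s : ℕ) (hs : 1 ≤ s) :
    {t : Finset V | G.IsNClique s t}.ncard ≤
      {t : Finset V | (kelmans G u v).IsNClique s t}.ncard :=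
  stmt_3_general G u v s
end

section
/- Let G be a simple graph, u, v adjacent vertices of G, and G' = G[u→v] the graph obtained by the Kelmans operation. Then the circumference of G' is at most the circumference of G, i.e., every cycle length achieved in G' is at most the maximum cycle length of G. -/
namespace SimpleGraph

variable {V W : Type*}

def HasCycleOfLengthAtLeast (G : SimpleGraph V) (n : ℕ) : Prop :=
  ∃ (b : V) (c : G.Walk b b), c.IsCycle ∧ n ≤ c.length

variable {G : SimpleGraph V}

theorem HasCycleOfLengthAtLeast.mono {m n : ℕ} (h : G.HasCycleOfLengthAtLeast n) (hmn : m ≤ n) :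
    G.HasCycleOfLengthAtLeast m :=
  let ⟨b, c, hc, hn⟩ := h
  ⟨b, c, hc, hmn.trans hn⟩

namespace Walk

theorem IsPath.hasCycleOfLengthAtLeast {a b w : V} {p : G.Walk a b} (hp : p.IsPath)
    (hab : a ≠ b) (hw : w ∉ p.support) (ha : G.Adj w a) (hb : G.Adj w b) :
    G.HasCycleOfLengthAtLeast (p.length + 2) := by
  refine ⟨w, cons ha (p.concat hb.symm), ?_, by simp⟩
  refine (cons_isCycle_iff _ ha).mpr ⟨hp.concat hw hb.symm, ?_⟩
  rw [edges_concat, List.concat_eq_append, List.mem_append, List.mem_singleton, Sym2.eq_iff]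
  rintro (he | ⟨rfl, -⟩ | ⟨-, rfl⟩)
  · exact hw (p.fst_mem_support_of_mem_edges he)
  · exact hw p.end_mem_support
  · exact hab rfl

theorem IsPath.exists_map {f : V → W} (hf : f.Injective) {H : SimpleGraph W} {x y : V}
    {p : G.Walk x y} (hp : p.IsPath) (hfp : ∀ a b, s(a, b) ∈ p.edges → H.Adj (f a) (f b)) :
    ∃ q : H.Walk (f x) (f y), q.IsPath ∧ q.support = p.support.map f ∧ q.length = p.length := by
  have hcomap : ∀ e ∈ p.edges, e ∈ (H.comap f).edgeSet := by
    intro e he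
    induction e using Sym2.ind with
    | _ a b => exact hfp a b he
  let q : H.Walk (f x) (f y) := (p.transfer _ hcomap).map (Hom.comap f H)
  refine ⟨q, (hp.transfer hcomap).map hf, ?_, ?_⟩
  · exact (support_map _ _).trans (congrArg _ (support_transfer _ _))
  · exact (length_map _ _).trans (length_transfer _ _)

theorem IsPath.hasCycleOfLengthAtLeast_of_map {f : V → W} (hf : f.Injective)
    {H : SimpleGraph W} {x y : V} {w : W} {p : G.Walk x y} (hp : p.IsPath) (hxy : x ≠ y)
    (hfp : ∀ a b, s(a, b) ∈ p.edges → H.Adj (f a) (f b)) (hw : ∀ a ∈ p.support, f a ≠ w)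
    (hx : H.Adj w (f x)) (hy : H.Adj w (f y)) :
    H.HasCycleOfLengthAtLeast (p.length + 2) := by
  obtain ⟨q, hq, hqs, hql⟩ := hp.exists_map hf hfp
  rw [← hql]
  refine hq.hasCycleOfLengthAtLeast (hf.ne hxy) ?_ hx hy
  rw [hqs, List.mem_map]
  rintro ⟨a, ha, rfl⟩
  exact hw a ha rfl

theorem IsCycle.exists_isPath_of_mem_support {a v : V} {c : G.Walk a a} (hc : c.IsCycle)
    (hv : v ∈ c.support) :
    ∃ (x y : V) (p : G.Walk x y), p.IsPath ∧ v ∉ p.support ∧ x ≠ y ∧ G.Adj v x ∧ G.Adj v y ∧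
      c.length = p.length + 2 := by
  classical
  obtain ⟨c', hc', hlen⟩ : ∃ c' : G.Walk v v, c'.IsCycle ∧ c.length = c'.length :=
    ⟨_, hc.rotate hv, (length_rotate ..).symm⟩
  have h3 := hc'.three_le_length
  rw [hlen]
  cases c' with
  | nil => simp at h3
  | cons hvx p =>
    cases p with
    | nil => simp at h3
    | cons h p =>
      obtain ⟨y, P, hyv, hP⟩ := exists_cons_eq_concat h p
      rw [hP] at hc' h3 ⊢
      obtain ⟨hPpath, hvP⟩ := (concat_isPath_iff hyv).mp ((cons_isCycle_iff _ hvx).mp hc').1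
      refine ⟨_, y, P, hPpath, hvP, ?_, hvx, hyv.symm, by simp⟩
      rintro rfl
      simp [length_eq_zero_iff.mpr (isPath_iff_nil.mp hPpath)] at h3

theorem IsPath.hasCycleOfLengthAtLeast_reroute {u v x y : V} {p : G.Walk y x}
    (hp : p.IsPath) (huv : G.Adj u v) (hvp : v ∉ p.support)
    (hpu : ∀ w, s(u, w) ∈ p.edges → G.Adj v w) (hux : G.Adj u x) (hvy : G.Adj v y)
    (hyu : y ≠ u) :
    G.HasCycleOfLengthAtLeast (p.length + 2) := by
  by_cases hu : u ∈ p.support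
  · obtain ⟨q, r, -, -, rfl⟩ := hp.mem_support_iff_exists_append.mp hu
    cases r with
    | nil => exact (hux.ne rfl).elim
    | @cons _ z _ huz r =>
      have hsupp : (q.append (cons huz r)).support = q.support ++ r.support := by
        simp [support_append]
      have hsupp' : (q.append (cons hux r.reverse)).support = q.support ++ r.support.reverse := by
        simp [support_append]
      have hperm : (q.support ++ r.support.reverse).Perm (q.support ++ r.support) :=
        (List.reverse_perm _).append_left _
      have hnd := hp.support_nodup
      rw [hsupp] at hnd hvp
      have hp' : (q.append (cons hux r.reverse)).IsPath := by
        rw [isPath_def, hsupp']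
        exact hperm.nodup_iff.mpr hnd
      have hyz : y ≠ z := fun hyz =>
        List.disjoint_of_nodup_append hnd q.start_mem_support (hyz ▸ r.start_mem_support)
      have hvz : G.Adj v z := hpu z (by simp [edges_append])
      have hcycle := hp'.hasCycleOfLengthAtLeast hyz (by rwa [hsupp', hperm.mem_iff]) hvy hvz
      simpa [length_append] using hcycle
  · have hvu : v ∉ (p.concat hux.symm).support := by
      simp [support_concat, hvp, huv.ne.symm]
    exact ((hp.concat hu hux.symm).hasCycleOfLengthAtLeast hyu hvu hvy huv.symm).mono (by simp)

end Walk

end SimpleGraph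

section

open SimpleGraph Walk

variable {V : Type*} {G : SimpleGraph V} {u v : V}

theorem adj_of_kelmans_adj_of_ne {a b : V} (h : (kelmans G u v).Adj a b) (ha : a ≠ v)
    (hb : b ≠ v) : G.Adj a b := by
  obtain ⟨-, h⟩ := h
  tauto

theorem adj_or_adj_of_kelmans_adj {w : V} (h : (kelmans G u v).Adj v w) :
    G.Adj v w ∨ G.Adj u w := by
  obtain ⟨hvw, h⟩ := h
  tauto

theorem adj_of_kelmans_adj_left {w : V} (h : (kelmans G u v).Adj u w) (hw : w ≠ v) :
    G.Adj v w := by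
  obtain ⟨-, h⟩ := h
  by_contra hvw
  rcases h with ⟨huw, hne⟩ | ⟨rfl, huw, hnot, -⟩ | ⟨rfl, -⟩ <;> tauto

theorem adj_swap_of_kelmans_adj_of_ne [DecidableEq V] {a b : V} (h : (kelmans G u v).Adj a b)
    (ha : a ≠ v) (hb : b ≠ v) : G.Adj (Equiv.swap u v a) (Equiv.swap u v b) := by
  by_cases hau : a = u
  · subst hau
    rw [Equiv.swap_apply_left, Equiv.swap_apply_of_ne_of_ne h.ne' hb]
    exact adj_of_kelmans_adj_left h hb
  by_cases hbu : b = u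
  · subst hbu
    rw [Equiv.swap_apply_left, Equiv.swap_apply_of_ne_of_ne hau ha]
    exact (adj_of_kelmans_adj_left h.symm ha).symm
  rw [Equiv.swap_apply_of_ne_of_ne hau ha, Equiv.swap_apply_of_ne_of_ne hbu hb]
  exact adj_of_kelmans_adj_of_ne h ha hb

theorem adj_swap_of_eq_or_adj [DecidableEq V] (huv : G.Adj u v) {x : V} (hx : x = u ∨ G.Adj u x)
    (hxv : x ≠ v) :
    G.Adj u (Equiv.swap u v x) := by
  rcases hx with rfl | hux
  · rwa [Equiv.swap_apply_left]
  · rwa [Equiv.swap_apply_of_ne_of_ne hux.ne' hxv]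

theorem kelmans_edges_subset_edgeSet {x y : V} {p : (kelmans G u v).Walk x y}
    (hvp : v ∉ p.support) : ∀ e ∈ p.edges, e ∈ G.edgeSet := by
  intro e he
  induction e using Sym2.ind with
  | _ a b =>
    exact adj_of_kelmans_adj_of_ne (p.adj_of_mem_edges he)
      (ne_of_mem_of_not_mem (p.fst_mem_support_of_mem_edges he) hvp)
      (ne_of_mem_of_not_mem (p.snd_mem_support_of_mem_edges he) hvp)

theorem kelmans_hasCycleOfLengthAtLeast_of_isPath (huv : G.Adj u v) {x y : V}
    {p : (kelmans G u v).Walk x y} (hp : p.IsPath) (hvp : v ∉ p.support) (hxy : x ≠ y)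
    (hx : (kelmans G u v).Adj v x) (hy : (kelmans G u v).Adj v y) :
    G.HasCycleOfLengthAtLeast (p.length + 2) := by
  classical
  have hpG := kelmans_edges_subset_edgeSet hvp
  wlog hvx : ¬ G.Adj v x generalizing x y p
  · rw [not_not] at hvx
    by_cases hvy : G.Adj v y
    · simpa using (hp.transfer hpG).hasCycleOfLengthAtLeast hxy (by simpa using hvp) hvx hvy
    · simpa using this hp.reverse (by simpa using hvp) hxy.symm hy hx
        (kelmans_edges_subset_edgeSet (by simpa using hvp)) hvy
  have hux : G.Adj u x := (adj_or_adj_of_kelmans_adj hx).resolve_left hvx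
  by_cases hyu : y = u ∨ G.Adj u y
  · refine hp.hasCycleOfLengthAtLeast_of_map (Equiv.injective _) hxy (fun a b he => ?_)
      (fun a ha => ?_) (adj_swap_of_eq_or_adj huv (.inr hux) hx.ne')
      (adj_swap_of_eq_or_adj huv hyu hy.ne')
    · exact adj_swap_of_kelmans_adj_of_ne (p.adj_of_mem_edges he)
        (ne_of_mem_of_not_mem (p.fst_mem_support_of_mem_edges he) hvp)
        (ne_of_mem_of_not_mem (p.snd_mem_support_of_mem_edges he) hvp)
    · rw [Ne, Equiv.swap_apply_eq_iff, Equiv.swap_apply_left]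
      exact ne_of_mem_of_not_mem ha hvp
  rw [not_or] at hyu
  have hvy : G.Adj v y := (adj_or_adj_of_kelmans_adj hy).resolve_right hyu.2
  have hpG' : ∀ e ∈ p.reverse.edges, e ∈ G.edgeSet := fun e he => hpG e (by simpa using he)
  have hpu : ∀ w, s(u, w) ∈ (p.reverse.transfer G hpG').edges → G.Adj v w := by
    intro w he
    rw [edges_transfer, edges_reverse, List.mem_reverse] at he
    exact adj_of_kelmans_adj_left (p.adj_of_mem_edges he)
      (ne_of_mem_of_not_mem (p.snd_mem_support_of_mem_edges he) hvp)
  simpa using (hp.reverse.transfer hpG').hasCycleOfLengthAtLeast_reroute huv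
    (by simpa using hvp) hpu hux hvy hyu.1

end

/-- If `u` and `v` are adjacent, every cycle length achieved in `G[u → v]` is at most
the length of some cycle of `G` (so the circumference does not increase). -/
theorem stmt_6 {V : Type*} (G : SimpleGraph V) (u v : V) (huv : G.Adj u v)
    (a : V) (c : (kelmans G u v).Walk a a) (hc : c.IsCycle) :
    ∃ (b : V) (c' : G.Walk b b), c'.IsCycle ∧ c.length ≤ c'.length := by
  by_cases hv : v ∈ c.support
  · obtain ⟨x, y, p, hp, hvp, hxy, hx, hy, hlen⟩ := hc.exists_isPath_of_mem_support hv
    rw [hlen]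
    exact kelmans_hasCycleOfLengthAtLeast_of_isPath huv hp hvp hxy hx hy
  · have hcG := kelmans_edges_subset_edgeSet hv
    exact ⟨a, c.transfer G hcG, hc.transfer hcG, (SimpleGraph.Walk.length_transfer _ _).ge⟩
end

section
/- Let G be a graph on n vertices and k a nonnegative integer. Suppose u and v are nonadjacent vertices of G with deg(u) + deg(v) ≥ 2k + 1. If G + uv has a matching of size k + 1, then G has a matching of size k + 1. -/
/-!
If the matching of size `k + 1` in `G + uv` avoids `uv`, it lives in `G`. Otherwise removing `uv`
leaves a matching `M` of size `k` in `G` missing `u` and `v`. If `u` or `v` has a neighbour outside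
the `2k` vertices of `M`, add that edge. If not, `N(u)` and the `M`-partners of `N(v)` are two
subsets of `V(M)` of total size `deg u + deg v > 2k`, so some edge `xw` of `M` has `x ~ u` and
`w ~ v`; replacing `xw` by `ux` and `vw` gives a matching of size `k + 1`.
-/

/-- `G` has a matching of size `m`: a set of `m` pairwise disjoint edges,
formalized as a subgraph all of whose vertices have a unique neighbor. -/
def hasMatchingOfSize {V : Type*} (G : SimpleGraph V) (m : ℕ) : Prop :=
  ∃ M : SimpleGraph.Subgraph G, M.IsMatching ∧ M.edgeSet.ncard = m

namespace SimpleGraph.Subgraph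

variable {V : Type*} {G H : SimpleGraph V} {M : G.Subgraph} {a b : V}

def ofSpanningCoeLE (M : H.Subgraph) (h : M.spanningCoe ≤ G) : G.Subgraph :=
  { M with adj_sub := fun hxy => h hxy }

lemma IsMatching.ncard_verts [Finite V] (hM : M.IsMatching) :
    M.verts.ncard = 2 * M.edgeSet.ncard := by
  have := Fintype.ofFinite M.edgeSet
  have hfiber (e : M.edgeSet) : Nat.card {x // hM.toEdge x = e} = 2 := by
    obtain ⟨e, he⟩ := e
    induction e using Sym2.ind with
    | _ x y =>
      change Nat.card (hM.toEdge ⁻¹' {⟨s(x, y), he⟩}) = 2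
      rw [Nat.card_coe_set_eq, hM.toEdge_preimage_singleton he]
      exact Set.ncard_pair (by simpa using he.ne)
  rw [← Nat.card_coe_set_eq, ← Nat.card_coe_set_eq,
    ← Nat.card_congr (Equiv.sigmaFiberEquiv hM.toEdge), Nat.card_sigma,
    Finset.sum_congr rfl fun e _ => hfiber e, Finset.sum_const, smul_eq_mul, mul_comm,
    Finset.card_univ, Nat.card_eq_fintype_card]

lemma IsMatching.exists_adj_of_ncard_verts_lt [Finite V] (hM : M.IsMatching) {A B : Set V}
    (hA : A ⊆ M.verts) (hB : B ⊆ M.verts) (hAB : M.verts.ncard < A.ncard + B.ncard) :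
    ∃ x ∈ A, ∃ y ∈ B, M.Adj x y := by
  choose! p hp using fun y (hy : y ∈ B) => (hM (hB hy)).exists
  have hpB : p '' B ⊆ M.verts := by
    rintro _ ⟨y, hy, rfl⟩
    exact (hp y hy).snd_mem
  have hcard : (p '' B).ncard = B.ncard :=
    Set.InjOn.ncard_image fun y hy y' hy' h => hM.eq_of_adj_right (h ▸ hp y hy) (hp y' hy')
  obtain ⟨x, hxA, y, hyB, rfl⟩ : (A ∩ p '' B).Nonempty := by
    rw [Set.nonempty_iff_ne_empty]
    intro h
    have hunion := Set.ncard_union_add_ncard_inter A (p '' B)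
    have hle := Set.ncard_le_ncard (Set.union_subset hA hpB)
    rw [h, Set.ncard_empty, hcard] at hunion
    omega
  exact ⟨p y, hxA, y, hyB, (hp y hyB).symm⟩

lemma IsMatching.deleteVerts_of_adj (hM : M.IsMatching) (hab : M.Adj a b) :
    (M.deleteVerts {a, b}).IsMatching := by
  rintro x ⟨hx, hxab⟩
  obtain ⟨y, hxy, huniq⟩ := hM hx
  have hyab : y ∉ ({a, b} : Set V) := by
    rintro (rfl | rfl)
    · exact hxab (.inr (hM.eq_of_adj_left hab hxy.symm).symm)
    · exact hxab (.inl (hM.eq_of_adj_right hxy hab))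
  exact ⟨y, deleteVerts_adj.mpr ⟨hx, hxab, hxy.snd_mem, hyab, hxy⟩,
    fun z hz => huniq z (deleteVerts_adj.mp hz).2.2.2.2⟩

lemma IsMatching.edgeSet_deleteVerts_of_adj (hM : M.IsMatching) (hab : M.Adj a b) :
    (M.deleteVerts {a, b}).edgeSet = M.edgeSet \ {s(a, b)} := by
  ext e
  induction e using Sym2.ind with
  | _ x y =>
    rw [Set.mem_sdiff, Subgraph.mem_edgeSet, Subgraph.mem_edgeSet, deleteVerts_adj]
    have hend {z w : V} (hzw : M.Adj z w) (hz : z ∈ ({a, b} : Set V)) : s(z, w) = s(a, b) := by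
      rcases hz with rfl | rfl
      · rw [hM.eq_of_adj_left hzw hab]
      · rw [hM.eq_of_adj_left hzw hab.symm, Sym2.eq_swap]
    constructor
    · rintro ⟨-, hx, -, -, hxy⟩
      refine ⟨hxy, fun h => hx ?_⟩
      rcases Sym2.eq_iff.mp h with ⟨rfl, -⟩ | ⟨rfl, -⟩ <;> simp
    · rintro ⟨hxy, hne⟩
      exact ⟨hxy.fst_mem, fun h => hne (hend hxy h), hxy.snd_mem,
        fun h => hne (Sym2.eq_swap.trans (hend hxy.symm h)), hxy⟩

lemma IsMatching.sup_subgraphOfAdj (hM : M.IsMatching) (hab : G.Adj a b) (ha : a ∉ M.verts)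
    (hb : b ∉ M.verts) : (M ⊔ G.subgraphOfAdj hab).IsMatching := by
  refine hM.sup (.subgraphOfAdj hab) ?_
  rw [hM.support_eq_verts, (IsMatching.subgraphOfAdj hab).support_eq_verts, subgraphOfAdj_verts,
    Set.disjoint_right]
  rintro x (rfl | rfl) <;> assumption

lemma ncard_edgeSet_sup_subgraphOfAdj [Finite V] (hab : G.Adj a b) (ha : a ∉ M.verts) :
    (M ⊔ G.subgraphOfAdj hab).edgeSet.ncard = M.edgeSet.ncard + 1 := by
  rw [edgeSet_sup, edgeSet_subgraphOfAdj, Set.union_singleton]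
  exact Set.ncard_insert_of_notMem (fun h => ha (M.edge_vert h)) (Set.toFinite _)

end SimpleGraph.Subgraph

open SimpleGraph Subgraph

section

variable {V : Type*} [Finite V] {G : SimpleGraph V} {M : G.Subgraph} {k : ℕ}

lemma hasMatchingOfSize_succ_of_isMatching {a b : V} (hM : M.IsMatching)
    (hk : M.edgeSet.ncard = k) (hab : G.Adj a b) (ha : a ∉ M.verts) (hb : b ∉ M.verts) :
    hasMatchingOfSize G (k + 1) :=
  ⟨_, hM.sup_subgraphOfAdj hab ha hb, by rw [ncard_edgeSet_sup_subgraphOfAdj hab ha, hk]⟩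

lemma hasMatchingOfSize_succ_of_two_mul_lt_ncard_neighborSet_add {u v : V}
    (hM : M.IsMatching) (hk : M.edgeSet.ncard = k) (hu : u ∉ M.verts) (hv : v ∉ M.verts)
    (huv : u ≠ v) (hdeg : 2 * k < (G.neighborSet u).ncard + (G.neighborSet v).ncard) :
    hasMatchingOfSize G (k + 1) := by
  by_cases hNu : G.neighborSet u ⊆ M.verts
  swap
  · obtain ⟨x, hux, hx⟩ := Set.not_subset.mp hNu
    exact hasMatchingOfSize_succ_of_isMatching hM hk hux hu hx
  by_cases hNv : G.neighborSet v ⊆ M.verts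
  swap
  · obtain ⟨w, hvw, hw⟩ := Set.not_subset.mp hNv
    exact hasMatchingOfSize_succ_of_isMatching hM hk hvw hv hw
  obtain ⟨x, hux : G.Adj u x, w, hvw : G.Adj v w, hxw⟩ :=
    hM.exists_adj_of_ncard_verts_lt hNu hNv (by rw [hM.ncard_verts, hk]; exact hdeg)
  set M₁ := M.deleteVerts {x, w}
  have hk₁ : M₁.edgeSet.ncard + 1 = k := by
    rw [hM.edgeSet_deleteVerts_of_adj hxw,
      Set.ncard_sdiff_singleton_add_one (Subgraph.mem_edgeSet.mpr hxw), hk]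
  have hu₁ : u ∉ M₁.verts := fun h => hu h.1
  have hx₁ : x ∉ M₁.verts := fun h => h.2 (.inl rfl)
  refine hasMatchingOfSize_succ_of_isMatching
    ((hM.deleteVerts_of_adj hxw).sup_subgraphOfAdj hux hu₁ hx₁) ?_ hvw ?_ ?_
  · rw [ncard_edgeSet_sup_subgraphOfAdj hux hu₁, hk₁]
  · rw [verts_sup, subgraphOfAdj_verts]
    rintro (h | rfl | rfl)
    · exact hv h.1
    · exact huv rfl
    · exact hv hxw.fst_mem
  · rw [verts_sup, subgraphOfAdj_verts]
    rintro (h | rfl | rfl)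
    · exact h.2 (.inr rfl)
    · exact hu hxw.snd_mem
    · exact hxw.ne rfl

end

theorem stmt_7_general {V : Type*} [Fintype V] (G : SimpleGraph V) (k : ℕ)
    (u v : V)
    (hdeg : 2 * k + 1 ≤ (G.neighborSet u).ncard + (G.neighborSet v).ncard)
    (h : hasMatchingOfSize (G ⊔ SimpleGraph.fromEdgeSet {s(u, v)}) (k + 1)) :
    hasMatchingOfSize G (k + 1) := by
  obtain ⟨M, hM, hk⟩ := h
  by_cases hMuv : M.Adj u v
  · have hle : (M.deleteVerts {u, v}).spanningCoe ≤ G :=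
      spanningCoe_sup_edge_le G fun h => (deleteVerts_adj.mp h).2.1 (.inl rfl)
    have hk₀ : (M.deleteVerts {u, v}).edgeSet.ncard = k := by
      have := Set.ncard_sdiff_singleton_add_one (Subgraph.mem_edgeSet.mpr hMuv)
      rw [← hM.edgeSet_deleteVerts_of_adj hMuv, hk] at this
      omega
    exact hasMatchingOfSize_succ_of_two_mul_lt_ncard_neighborSet_add
      (M := (M.deleteVerts {u, v}).ofSpanningCoeLE hle) (hM.deleteVerts_of_adj hMuv) hk₀
      (fun h => h.2 (.inl rfl)) (fun h => h.2 (.inr rfl)) hMuv.ne hdeg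
  · exact ⟨M.ofSpanningCoeLE (spanningCoe_sup_edge_le G hMuv), hM, hk⟩

/-- Bondy–Chvátal closure lemma for matchings: if `u, v` are nonadjacent with
`deg u + deg v ≥ 2k + 1`, and `G + uv` has a matching of size `k + 1`,
then so does `G`. -/
theorem stmt_7 {V : Type*} [Fintype V] (G : SimpleGraph V) (n k : ℕ)
    (hn : Fintype.card V = n) (u v : V) (huv : ¬ G.Adj u v) (hne : u ≠ v)
    (hdeg : 2 * k + 1 ≤ (G.neighborSet u).ncard + (G.neighborSet v).ncard)
    (h : hasMatchingOfSize (G ⊔ SimpleGraph.fromEdgeSet {s(u, v)}) (k + 1)) :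
    hasMatchingOfSize G (k + 1) :=
  stmt_7_general G k u v hdeg h
end

section
/- Let n, k, s be integers with n ≥ k ≥ 4 and 1 ≤ s ≤ ⌊k/2⌋ − 1. The graph W_{n,k−1,s} = K_s ∨ ((n−k+s+1)K_1 ∪ K_{k−2s−1}) is connected and contains no path on k vertices. -/
/-!
Write `X` for the dominating clique `K_s`, `Y` for the clique `K_{k-2s-1}` and `Z` for the
independent vertices, whose neighbours all lie in `X`. Walking along a path, every vertex of `Z`
is followed by a vertex of `X` (or ends the path), and so is the last vertex of `Y` on it; these
successors are distinct. Hence a path meets `Z` at most `|X| + 1 ≤ s + 1` times, and at most `s`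
times if it meets `Y`. Counting, a path has at most `2s + 1` vertices if it avoids `Y` and at most
`s + (k - 2s - 1) + s = k - 1` otherwise.
-/

/-- The graph `W n k s = K_s ∨ ((n−k+s)K_1 ∪ K_{k−2s})` on vertex set `Fin n`:
the first `s` vertices form a dominating clique `X`, the vertices with index
in `[s, k−s)` form a clique `Y` (so `X ∪ Y` is a clique on `k − s` vertices),
and the remaining `n − k + s` vertices are independent, joined only to `X`. -/
def Wgraph (n k s : ℕ) : SimpleGraph (Fin n) where
  Adj x y := x ≠ y ∧ (x.val < s ∨ y.val < s ∨ (x.val < k - s ∧ y.val < k - s))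
  symm := by constructor; rintro x y ⟨hxy, h⟩; exact ⟨hxy.symm, by tauto⟩
  loopless := by constructor; rintro x ⟨h, -⟩; exact h rfl

theorem List.Nodup.countP_le_card {α β : Type*} {l : List α} (hl : l.Nodup) {p : α → Bool}
    {f : α → β} (hf : Function.Injective f) {A : Finset β} (hA : ∀ a ∈ l, p a → f a ∈ A) :
    l.countP p ≤ A.card := by
  classical
  rw [List.countP_eq_length_filter, ← List.toFinset_card_of_nodup (hl.filter p)]
  refine Finset.card_le_card_of_injOn f (fun a ha => ?_) hf.injOn
  simp only [List.coe_toFinset, Set.mem_ofPred_eq, List.mem_filter] at ha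
  exact hA a ha.1 ha.2

theorem List.countP_add_countP_add_countP_eq_length {α : Type*} (l : List α) {p q : α → Prop}
    [DecidablePred p] [DecidablePred q] (hpq : ∀ a, p a → ¬ q a) :
    l.countP (p ·) + l.countP (q ·) + l.countP (fun a => ¬ p a ∧ ¬ q a) = l.length := by
  induction l with
  | nil => rfl
  | cons a l ih =>
    have := hpq a
    simp only [List.countP_cons, List.length_cons]
    split_ifs <;> simp_all <;> omega

namespace SimpleGraph.Walk

variable {V : Type*} {G : SimpleGraph V} {X Z : Set V} [DecidablePred (· ∈ X)]
  [DecidablePred (· ∈ Z)]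

/-- A first vertex in `X` follows no vertex of the walk, so it sharpens the bound by one; only
this sharper form survives the induction. -/
theorem countP_support_le_of_neighborSet_subset (hZ : ∀ a ∈ Z, G.neighborSet a ⊆ X)
    {u v : V} (p : G.Walk u v) :
    p.support.countP (· ∈ Z) + (if ∃ a ∈ p.support, a ∉ X ∧ a ∉ Z then 1 else 0)
      + (if u ∈ X then 1 else 0) ≤ p.support.countP (· ∈ X) + 1 := by
  induction p with
  | nil =>
    simp only [support_nil, List.countP_singleton, List.mem_singleton, exists_eq_left]
    split_ifs <;> simp_all
  | @cons u b w h p ih =>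
    have hub : u ∈ Z → b ∈ X := fun hu => hZ u hu h
    have hbu : b ∈ Z → u ∈ X := fun hb => hZ b hb h.symm
    simp only [support_cons, List.countP_cons, List.mem_cons, exists_eq_or_imp]
    split_ifs at ih ⊢ <;> simp_all <;> omega

end SimpleGraph.Walk

namespace Wgraph

variable {n m s : ℕ}

theorem connected (hn : 0 < n) (hs : 0 < s) : (Wgraph n m s).Connected := by
  have : Nonempty (Fin n) := ⟨⟨0, hn⟩⟩
  have reach_zero (x : Fin n) : (Wgraph n m s).Reachable x ⟨0, hn⟩ := by
    by_cases hx : x = ⟨0, hn⟩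
    · exact hx ▸ .rfl
    · exact SimpleGraph.Adj.reachable ⟨hx, .inr (.inl hs)⟩
  exact ⟨fun x y => (reach_zero x).trans (reach_zero y).symm⟩

theorem neighborSet_subset {a : Fin n} (ha : max s (m - s) ≤ a.val) :
    (Wgraph n m s).neighborSet a ⊆ {b | b.val < s} := by
  rintro b ⟨-, h⟩
  change b.val < s
  omega

theorem length_support_le {u v : Fin n} {p : (Wgraph n m s).Walk u v} (hp : p.IsPath) :
    p.support.length ≤ max (2 * s + 1) m := by
  set X : Set (Fin n) := {b | b.val < s}
  set Z : Set (Fin n) := {b | max s (m - s) ≤ b.val}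
  have hZ := p.countP_support_le_of_neighborSet_subset (X := X) (Z := Z)
    fun a ha => neighborSet_subset ha
  have hX : p.support.countP (· ∈ X) ≤ s := by
    simpa using hp.support_nodup.countP_le_card Fin.val_injective (A := Finset.range s)
      (by simp [X])
  have hY : p.support.countP (fun a => a ∉ X ∧ a ∉ Z) ≤ m - s - s := by
    simpa using hp.support_nodup.countP_le_card Fin.val_injective (A := Finset.Ico s (m - s))
      (by simp [X, Z]; omega)
  have hpart := p.support.countP_add_countP_add_countP_eq_length
    (p := (· ∈ X)) (q := (· ∈ Z)) fun a (ha : a.val < s) (ha' : max s (m - s) ≤ a.val) => by omega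
  by_cases hYex : ∃ a ∈ p.support, a ∉ X ∧ a ∉ Z
  · have hYpos : 0 < p.support.countP (fun a => a ∉ X ∧ a ∉ Z) :=
      List.countP_pos_iff.mpr (by simpa using hYex)
    rw [if_pos hYex] at hZ
    split_ifs at hZ <;> omega
  · have hYzero : p.support.countP (fun a => a ∉ X ∧ a ∉ Z) = 0 :=
      List.countP_eq_zero.mpr (by simpa using hYex)
    rw [if_neg hYex] at hZ
    split_ifs at hZ <;> omega

end Wgraph

/-- For `n ≥ k ≥ 4` and `1 ≤ s ≤ ⌊k/2⌋ − 1`, the graph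
`W_{n,k−1,s} = K_s ∨ ((n−k+s+1)K_1 ∪ K_{k−2s−1})` is connected and contains
no path on `k` vertices. -/
theorem stmt_11 (n k s : ℕ) (hkn : k ≤ n) (hk : 4 ≤ k) (hs1 : 1 ≤ s)
    (hst : s ≤ k / 2 - 1) :
    (Wgraph n (k - 1) s).Connected ∧
    ¬ ∃ (a b : Fin n) (p : (Wgraph n (k - 1) s).Walk a b),
        p.IsPath ∧ p.length + 1 = k := by
  refine ⟨Wgraph.connected (by omega) hs1, ?_⟩
  rintro ⟨a, b, p, hp, hlen⟩
  have := Wgraph.length_support_le hp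
  rw [SimpleGraph.Walk.length_support] at this
  omega
end

section
/- There exist graphs G_1 and G_2 such that λ(G_1) < λ(G_2) but λ(G_1 ∨ K_1) > λ(G_2 ∨ K_1), where λ denotes the adjacency spectral radius. Concretely, G_1 = K_3 ∨ 5K_1 and G_2 = K_1 ∨ (K_5 ∪ 2K_1) satisfy λ(G_1) = 5 < λ(G_2), yet λ(G_1 ∨ K_1) > λ(G_2 ∨ K_1). -/
/-- The adjacency spectral radius of a finite simple graph: the supremum of the
(real) spectrum of its adjacency matrix, i.e. its largest eigenvalue. -/
noncomputable def specRad {V : Type*} [Fintype V] [DecidableEq V] (G : SimpleGraph V) : ℝ := by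
  classical exact sSup (spectrum ℝ (G.adjMatrix ℝ))

/-- The join `G ∨ K_1`: add one new vertex (`none`) adjacent to every vertex of `G`. -/
def cone {V : Type*} (G : SimpleGraph V) : SimpleGraph (Option V) where
  Adj x y :=
    match x, y with
    | some a, some b => G.Adj a b
    | some _, none => True
    | none, some _ => True
    | none, none => False
  symm := ⟨by rintro (_ | a) (_ | b) h <;> simp_all <;> exact h.symm⟩
  loopless := ⟨by rintro (_ | a) h <;> simp_all⟩

/-- `G₁ = K_3 ∨ 5K_1` on `Fin 8`: the first three vertices form a dominating clique. -/
def G1 : SimpleGraph (Fin 8) where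
  Adj x y := x ≠ y ∧ (x.val < 3 ∨ y.val < 3)
  symm := ⟨by rintro x y ⟨hxy, h⟩; exact ⟨hxy.symm, by tauto⟩⟩
  loopless := ⟨by rintro x ⟨h, -⟩; exact h rfl⟩

/-- `G₂ = K_1 ∨ (K_5 ∪ 2K_1)` on `Fin 8`: vertex `0` is dominating and
vertices `1,…,5` form a clique. -/
def G2 : SimpleGraph (Fin 8) where
  Adj x y := x ≠ y ∧ (x.val = 0 ∨ y.val = 0 ∨ (x.val ≤ 5 ∧ y.val ≤ 5))
  symm := ⟨by rintro x y ⟨hxy, h⟩; exact ⟨hxy.symm, by tauto⟩⟩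
  loopless := ⟨by rintro x ⟨h, -⟩; exact h rfl⟩

/-!
Call a vertex partition `π` equitable with quotient matrix `B` when every vertex of cell `i` has
exactly `B i j` neighbours in cell `j`. A positive eigenvector `w` of `B` then lifts to the positive
eigenvector `w ∘ π` of the adjacency matrix, and a positive eigenvector of a nonnegative matrix
belongs to its spectral radius (Collatz–Wielandt). All four graphs have equitable partitions into
two or three cells, so their spectral radii are the largest roots of `μ² - 2μ - 15` (that is, `5`),
`μ³ - 4μ² - 7μ + 8` (`≈ 5.07`), `μ² - 3μ - 20` (`≈ 6.217`) and `μ³ - 5μ² - 10μ + 16` (`≈ 6.198`),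
and the intermediate value theorem separates these roots.
-/

open Matrix Module End Finset

theorem Matrix.mem_spectrum_iff_exists_mulVec_eq_smul {n K : Type*} [Fintype n] [DecidableEq n]
    [Field K] {A : Matrix n n K} {μ : K} :
    μ ∈ spectrum K A ↔ ∃ v ≠ 0, A *ᵥ v = μ • v := by
  rw [← spectrum_toLin', ← hasEigenvalue_iff_mem_spectrum]
  constructor
  · intro h
    obtain ⟨v, hv⟩ := h.exists_hasEigenvector
    exact ⟨v, hv.2, by simpa using hv.apply_eq_smul⟩
  · rintro ⟨v, hv, h⟩
    exact hasEigenvalue_of_hasEigenvector ⟨mem_eigenspace_iff.mpr (by simpa using h), hv⟩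

theorem Matrix.abs_le_of_mem_spectrum_of_mulVec_le {n : Type*} [Fintype n] [DecidableEq n]
    {A : Matrix n n ℝ} (hA : ∀ i j, 0 ≤ A i j) {v : n → ℝ} (hv : ∀ i, 0 < v i) {b : ℝ}
    (hb : A *ᵥ v ≤ b • v) {μ : ℝ} (hμ : μ ∈ spectrum ℝ A) : |μ| ≤ b := by
  obtain ⟨x, hx0, hx⟩ := mem_spectrum_iff_exists_mulVec_eq_smul.mp hμ
  obtain ⟨j, hj⟩ := Function.ne_iff.mp hx0
  -- `t` is the least scalar with `|x| ≤ t • v`; test the eigen-equation where equality holds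
  obtain ⟨i, -, hi⟩ := univ.exists_max_image (fun k => |x k| / v k) ⟨j, mem_univ j⟩
  set t := |x i| / v i
  have hxt (k : n) : |x k| ≤ t * v k := (div_le_iff₀ (hv k)).mp (hi k (mem_univ k))
  have ht : 0 < t := (div_pos (abs_pos.mpr hj) (hv j)).trans_le (hi j (mem_univ j))
  have hti : t * v i = |x i| := div_mul_cancel₀ _ (hv i).ne'
  have hxi : 0 < |x i| := hti ▸ mul_pos ht (hv i)
  refine le_of_mul_le_mul_right ?_ hxi
  calc |μ| * |x i| = |(A *ᵥ x) i| := by rw [hx, Pi.smul_apply, smul_eq_mul, abs_mul]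
    _ ≤ ∑ k, A i k * |x k| := by
      simp only [mulVec, dotProduct]
      refine (abs_sum_le_sum_abs _ _).trans_eq (sum_congr rfl fun k _ => ?_)
      rw [abs_mul, abs_of_nonneg (hA i k)]
    _ ≤ ∑ k, A i k * (t * v k) := by gcongr with k; exacts [hA i k, hxt k]
    _ = t * (A *ᵥ v) i := by
      simp only [mulVec, dotProduct, mul_sum]
      exact sum_congr rfl fun k _ => by ring
    _ ≤ t * (b * v i) := by gcongr; exact hb i
    _ = b * |x i| := by rw [← hti]; ring

namespace SimpleGraph

variable {V ι : Type*} [Fintype V] {G : SimpleGraph V} [DecidableRel G.Adj]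

theorem specRad_eq_sSup [DecidableEq V] : specRad G = sSup (spectrum ℝ (G.adjMatrix ℝ)) := by
  unfold specRad
  congr!

theorem specRad_eq_of_mulVec_eq_smul [DecidableEq V] [Nonempty V] {v : V → ℝ}
    (hv : ∀ x, 0 < v x) {μ : ℝ} (h : G.adjMatrix ℝ *ᵥ v = μ • v) : specRad G = μ := by
  rw [specRad_eq_sSup]
  refine IsGreatest.csSup_eq ⟨?_, fun ν hν => ?_⟩
  · refine mem_spectrum_iff_exists_mulVec_eq_smul.mpr ⟨v, fun hv0 => ?_, h⟩
    exact (hv (Classical.arbitrary V)).ne' (congrFun hv0 _)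
  · refine (le_abs_self ν).trans (abs_le_of_mem_spectrum_of_mulVec_le (fun x y => ?_) hv h.le hν)
    rw [adjMatrix_apply]
    positivity

variable (G) in
def IsEquitable [DecidableEq ι] (π : V → ι) (B : Matrix ι ι ℕ) : Prop :=
  ∀ x j, #{y ∈ G.neighborFinset x | π y = j} = B (π x) j

instance [DecidableEq ι] [Fintype ι] (π : V → ι) (B : Matrix ι ι ℕ) :
    Decidable (G.IsEquitable π B) := by
  unfold IsEquitable
  infer_instance

theorem IsEquitable.adjMatrix_mulVec_comp {α : Type*} [NonAssocSemiring α] [DecidableEq ι]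
    [Fintype ι] {π : V → ι} {B : Matrix ι ι ℕ} (hπ : G.IsEquitable π B) (w : ι → α) :
    G.adjMatrix α *ᵥ (w ∘ π) = (B.map (↑) *ᵥ w) ∘ π := by
  funext x
  rw [adjMatrix_mulVec_apply, Function.comp_apply, mulVec, dotProduct, ← sum_fiberwise _ π]
  refine sum_congr rfl fun j _ =>
    (sum_congr rfl fun y hy => congrArg w (mem_filter.mp hy).2).trans ?_
  rw [sum_const, hπ, nsmul_eq_mul, map_apply]

theorem IsEquitable.specRad_eq [DecidableEq V] [Nonempty V] [DecidableEq ι] [Fintype ι]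
    {π : V → ι} {B : Matrix ι ι ℕ} (hπ : G.IsEquitable π B) {w : ι → ℝ} (hw : ∀ i, 0 < w i)
    {μ : ℝ} (h : B.map (↑) *ᵥ w = μ • w) : specRad G = μ :=
  specRad_eq_of_mulVec_eq_smul (fun x => hw (π x))
    ((hπ.adjMatrix_mulVec_comp w).trans (by rw [h]; rfl))

end SimpleGraph

instance : DecidableRel G1.Adj := fun x y =>
  decidable_of_iff (x ≠ y ∧ (x.val < 3 ∨ y.val < 3)) Iff.rfl

instance : DecidableRel G2.Adj := fun x y =>
  decidable_of_iff (x ≠ y ∧ (x.val = 0 ∨ y.val = 0 ∨ (x.val ≤ 5 ∧ y.val ≤ 5))) Iff.rfl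

instance {V : Type*} {G : SimpleGraph V} [DecidableRel G.Adj] : DecidableRel (cone G).Adj
  | some a, some b => decidable_of_iff (G.Adj a b) Iff.rfl
  | some _, none => isTrue trivial
  | none, some _ => isTrue trivial
  | none, none => isFalse id

theorem specRad_G1 : specRad G1 = 5 := by
  have hπ : G1.IsEquitable (fun x => if x.val < 3 then 0 else 1) !![2, 5; 3, 0] := by decide
  refine hπ.specRad_eq (w := ![5, 3]) (fun i => by fin_cases i <;> norm_num) ?_
  ext i
  fin_cases i <;> simp [mulVec, dotProduct, Fin.sum_univ_two] <;> norm_num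

theorem specRad_G2_eq {μ : ℝ} (hμ : μ ^ 3 - 4 * μ ^ 2 - 7 * μ + 8 = 0) (h4 : 4 < μ) :
    specRad G2 = μ := by
  have hπ : G2.IsEquitable (fun x => if x.val = 0 then 0 else if x.val ≤ 5 then 1 else 2)
      !![0, 5, 2; 1, 4, 0; 1, 0, 0] := by decide
  refine hπ.specRad_eq (w := ![μ * (μ - 4), μ, μ - 4])
    (fun i => by fin_cases i <;> simp <;> nlinarith) ?_
  ext i
  fin_cases i <;> simp [mulVec, dotProduct, Fin.sum_univ_three] <;> linarith

theorem specRad_cone_G1_eq {μ : ℝ} (hμ : μ ^ 2 - 3 * μ - 20 = 0) (h0 : 0 < μ) :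
    specRad (cone G1) = μ := by
  have hπ : (cone G1).IsEquitable (fun x => x.elim 0 fun v => if v.val < 3 then 0 else 1)
      !![3, 5; 4, 0] := by decide
  refine hπ.specRad_eq (w := ![μ, 4]) (fun i => by fin_cases i <;> simp [h0]) ?_
  ext i
  fin_cases i <;> simp [mulVec, dotProduct, Fin.sum_univ_two] <;> linarith

theorem specRad_cone_G2_eq {μ : ℝ} (hμ : μ ^ 3 - 5 * μ ^ 2 - 10 * μ + 16 = 0) (h4 : 4 < μ) :
    specRad (cone G2) = μ := by
  have hπ : (cone G2).IsEquitable
      (fun x => x.elim 0 fun v => if v.val = 0 then 0 else if v.val ≤ 5 then 1 else 2)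
      !![1, 5, 2; 2, 4, 0; 2, 0, 0] := by decide
  refine hπ.specRad_eq (w := ![μ * (μ - 4), 2 * μ, 2 * (μ - 4)])
    (fun i => by fin_cases i <;> simp <;> nlinarith) ?_
  ext i
  fin_cases i <;> simp [mulVec, dotProduct, Fin.sum_univ_three] <;> linarith

/-- `λ(G₁) = 5 < λ(G₂)`, and yet `λ(G₁ ∨ K_1) > λ(G₂ ∨ K_1)`. -/
theorem stmt_14 :
    specRad G1 = 5 ∧ specRad G1 < specRad G2 ∧ specRad (cone G2) < specRad (cone G1) := by
  obtain ⟨μ, ⟨h5, -⟩, hμ⟩ :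
      ∃ μ ∈ Set.Ioo (5 : ℝ) (51 / 10), μ ^ 3 - 4 * μ ^ 2 - 7 * μ + 8 = 0 :=
    intermediate_value_Ioo (by norm_num) (by fun_prop) (by norm_num)
  obtain ⟨ν₁, ⟨hν₁_gt, -⟩, hν₁⟩ : ∃ ν ∈ Set.Ioo (31 / 5 : ℝ) 7, ν ^ 2 - 3 * ν - 20 = 0 :=
    intermediate_value_Ioo (by norm_num) (by fun_prop) (by norm_num)
  obtain ⟨ν₂, ⟨h6, hν₂_lt⟩, hν₂⟩ :
      ∃ ν ∈ Set.Ioo (6 : ℝ) (31 / 5), ν ^ 3 - 5 * ν ^ 2 - 10 * ν + 16 = 0 :=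
    intermediate_value_Ioo (by norm_num) (by fun_prop) (by norm_num)
  rw [specRad_G1, specRad_G2_eq hμ (by linarith), specRad_cone_G1_eq hν₁ (by linarith),
    specRad_cone_G2_eq hν₂ (by linarith)]
  exact ⟨rfl, h5, hν₂_lt.trans hν₁_gt⟩
end

section
/- Let G' be a graph in which for every edge xy, N[x] ⊆ N[y] or N[y] ⊆ N[x]. Then for any two maximal cliques X and Y of G', there are no edges between X \ Y and Y \ X. -/
lemma aux_16 {V : Type*} (G' : SimpleGraph V) {a b : V} {X : Set V}
    (hX : G'.IsClique X ∧ ∀ Z : Set V, G'.IsClique Z → X ⊆ Z → Z = X)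
    (haX : a ∈ X) (hab : G'.Adj a b)
    (h : insert a (G'.neighborSet a) ⊆ insert b (G'.neighborSet b)) : b ∈ X := by
  have hclique : G'.IsClique (insert b X) := by
    intro u hu v hv huv
    rcases hu with rfl | hu <;> rcases hv with rfl | hv
    · exact absurd rfl huv
    · -- u = b, v ∈ X
      by_cases hva : v = a
      · subst hva; exact hab.symm
      · have : v ∈ insert u (G'.neighborSet u) :=
          h (Set.mem_insert_iff.mpr (Or.inr (hX.1 haX hv (Ne.symm hva))))
        rcases this with rfl | hv'
        · exact absurd rfl huv
        · exact hv'
    · by_cases hua : u = a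
      · subst hua; exact hab
      · have : u ∈ insert v (G'.neighborSet v) :=
          h (Set.mem_insert_iff.mpr (Or.inr (hX.1 haX hu (Ne.symm hua))))
        rcases this with rfl | hu'
        · exact absurd rfl huv
        · exact hu'.symm
    · exact hX.1 hu hv huv
  have := hX.2 _ hclique (Set.subset_insert _ _)
  rw [← this]; exact Set.mem_insert _ _

/-- In a graph in which for every edge `xy` one of the closed neighborhoods `N[x]`,
`N[y]` contains the other, there are no edges between `X \ Y` and `Y \ X` for
any two maximal cliques `X` and `Y`. -/
theorem stmt_16 {V : Type*} (G' : SimpleGraph V)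
    (hthresh : ∀ x y : V, G'.Adj x y →
      insert x (G'.neighborSet x) ⊆ insert y (G'.neighborSet y) ∨
      insert y (G'.neighborSet y) ⊆ insert x (G'.neighborSet x))
    (X Y : Set V)
    (hX : G'.IsClique X ∧ ∀ Z : Set V, G'.IsClique Z → X ⊆ Z → Z = X)
    (hY : G'.IsClique Y ∧ ∀ Z : Set V, G'.IsClique Z → Y ⊆ Z → Z = Y) :
    ∀ a ∈ X \ Y, ∀ b ∈ Y \ X, ¬ G'.Adj a b := by
  rintro a ⟨haX, haY⟩ b ⟨hbY, hbX⟩ hab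
  rcases hthresh a b hab with h | h
  · exact hbX (aux_16 G' hX haX hab h)
  · exact haY (aux_16 G' hY hbY hab.symm h)
end

section
/- Let G be a graph on n vertices and v a vertex of G with deg(v) ≥ 1. Then λ(G)^2 ≤ λ(G − v)^2 + 2·deg(v) − 1, where λ denotes the adjacency spectral radius and G − v is the graph obtained by deleting v. -/
/-!
Write `l = λ(G)`, `a = λ(G − v)`, `A'` for the adjacency matrix of `G − v`, `b` for the
indicator vector of `N(v)` and `d = deg v`. For an eigenvector `x` of `A(G)` for `l`, with `y`
its restriction to `V − v`, the eigen-equation splits into `l x_v = ⟨b, y⟩` and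
`(l − A') y = x_v b`.
If `l > a` then `x_v ≠ 0`. The spectrum of `A'` lies in `[−a, a]` (entrywise nonnegativity), so
`q(t) = (l − t)(a − t)(a + t) = (l − t)(l + t)(l − t) − (l² − a²)(l − t)` is nonnegative on it and
`⟨y, q(A') y⟩ ≥ 0`, which unfolds to `l (l² − a²) ≤ l d + ⟨b, A' b⟩`. With
`⟨b, A' b⟩ ≤ min (a d) (d (d − 1))` this gives `l² ≤ a² + 2d − 1`.
-/

open Matrix Polynomial
open scoped MatrixOrder

theorem sq_le_sq_add_two_mul_sub_one_of_cubic_le {l a d s : ℝ} (hd : 1 ≤ d) (ha : 0 ≤ a)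
    (hal : a < l) (hs₁ : s ≤ a * d) (hs₂ : s ≤ d * (d - 1))
    (h : l * (l ^ 2 - a ^ 2) ≤ l * d + s) :
    l ^ 2 ≤ a ^ 2 + 2 * d - 1 := by
  have hl : 0 < l := ha.trans_lt hal
  rcases le_or_gt d l with hdl | hld
  · nlinarith [mul_nonneg (sub_nonneg.mpr hdl) (sub_nonneg.mpr hd)]
  -- For `l < d`: either `s ≤ l (d - 1)`, or `a > l (d - 1) / d`
  -- and then `l² - a² < l² (2d - 1) / d² < 2d - 1`.
  rcases le_or_gt (a * d) (l * (d - 1)) with had | had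
  · nlinarith
  · have hsq : (l * (d - 1)) ^ 2 < (a * d) ^ 2 :=
      pow_lt_pow_left₀ had (mul_nonneg hl.le (by linarith)) two_ne_zero
    nlinarith [mul_pos (by linarith : (0 : ℝ) < d) (by linarith : (0 : ℝ) < d)]

namespace Matrix

section Split

variable {m R : Type*} [Fintype m] [DecidableEq m] [CommRing R]

theorem mulVec_apply_eq_add_sum_subtype_ne (A : Matrix m m R) (x : m → R) (v i : m) :
    (A *ᵥ x) i = A i v * x v + ∑ w : {w // w ≠ v}, A i w * x w :=
  Fintype.sum_eq_add_sum_subtype_ne _ v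

theorem mul_apply_eq_dotProduct_of_mulVec_eq_smul {A : Matrix m m R} {x : m → R} {l : R}
    (hx : A *ᵥ x = l • x) {v : m} (hv : A v v = 0) :
    l * x v = (fun w : {w // w ≠ v} => A v w) ⬝ᵥ (fun w => x w) := by
  rw [← smul_eq_mul, ← Pi.smul_apply, ← hx, mulVec_apply_eq_add_sum_subtype_ne _ _ v, hv,
    zero_mul, zero_add]
  rfl

theorem smul_sub_submatrix_mulVec_of_mulVec_eq_smul {A : Matrix m m R} (hA : A.IsSymm)
    {x : m → R} {l : R} (hx : A *ᵥ x = l • x) (v : m) :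
    l • (fun w : {w // w ≠ v} => x w) -
      A.submatrix (Subtype.val : {w // w ≠ v} → m) Subtype.val *ᵥ
        (fun w : {w // w ≠ v} => x w) =
      x v • fun w : {w // w ≠ v} => A v w := by
  ext w
  have := congrFun hx w
  rw [mulVec_apply_eq_add_sum_subtype_ne _ _ v, hA.apply v] at this
  simp only [Pi.sub_apply, Pi.smul_apply, smul_eq_mul, mulVec, dotProduct, submatrix_apply]
    at this ⊢
  linear_combination -this

end Split

theorem mem_spectrum_iff_exists_mulVec_eq_smul_s18 {n K : Type*} [Fintype n] [DecidableEq n]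
    [Field K] {A : Matrix n n K} {μ : K} :
    μ ∈ spectrum K A ↔ ∃ x, x ≠ 0 ∧ A *ᵥ x = μ • x := by
  rw [← spectrum_toLin', ← Module.End.hasEigenvalue_iff_mem_spectrum,
    Module.End.hasEigenvalue_iff]
  simp [Submodule.ne_bot_iff, and_comm]

section NonnegEntries

variable {n : Type*} [Fintype n] {A : Matrix n n ℝ}

theorem neg_dotProduct_mulVec_le_abs (hA : ∀ i j, 0 ≤ A i j) (x : n → ℝ) :
    -(x ⬝ᵥ (A *ᵥ x)) ≤ |x| ⬝ᵥ (A *ᵥ |x|) := by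
  simp only [dotProduct, mulVec, Finset.mul_sum, ← Finset.sum_neg_distrib]
  gcongr with i _ j _
  calc -(x i * (A i j * x j)) ≤ |x i * (A i j * x j)| := neg_le_abs _
    _ = |x| i * (A i j * |x| j) := by simp [abs_mul, abs_of_nonneg (hA i j)]

theorem dotProduct_mulVec_le_sq_sum_sub (hA : ∀ i j, A i j ≤ 1) (hA₀ : ∀ i, A i i = 0)
    {b : n → ℝ} (hb : 0 ≤ b) :
    b ⬝ᵥ (A *ᵥ b) ≤ (∑ i, b i) ^ 2 - b ⬝ᵥ b := by
  classical
  calc b ⬝ᵥ (A *ᵥ b) = ∑ i, ∑ j, b i * A i j * b j := by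
        simp only [dotProduct, mulVec, Finset.mul_sum, mul_assoc]
    _ ≤ ∑ i, ∑ j, b i * (1 - if i = j then 1 else 0) * b j := by
        gcongr with i _ j _
        · exact hb j
        · exact hb i
        · split_ifs with h
          · simp [h, hA₀]
          · simpa using hA i j
    _ = (∑ i, b i) ^ 2 - b ⬝ᵥ b := by
        simp [mul_sub, sub_mul, sq, Finset.sum_mul_sum, dotProduct]

end NonnegEntries

section Hermitian

variable {n : Type*} [Fintype n] [DecidableEq n] {A : Matrix n n ℝ}

theorem le_sSup_real_spectrum {μ : ℝ} (hμ : μ ∈ spectrum ℝ A) :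
    μ ≤ sSup (spectrum ℝ A) :=
  le_csSup finite_real_spectrum.bddAbove hμ

theorem IsHermitian.sSup_spectrum_mem [Nonempty n] (hA : A.IsHermitian) :
    sSup (spectrum ℝ A) ∈ spectrum ℝ A := by
  refine Set.Nonempty.csSup_mem ?_ finite_real_spectrum
  rw [hA.spectrum_real_eq_range_eigenvalues]
  exact Set.range_nonempty _

theorem IsHermitian.dotProduct_aeval_mulVec_nonneg (hA : A.IsHermitian) {q : ℝ[X]}
    (hq : ∀ t ∈ spectrum ℝ A, 0 ≤ q.eval t) (x : n → ℝ) :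
    0 ≤ x ⬝ᵥ (aeval A q *ᵥ x) := by
  rw [← cfc_polynomial q A hA.isSelfAdjoint]
  simpa using (cfc_nonneg hq).posSemidef.dotProduct_mulVec_nonneg x

theorem IsHermitian.dotProduct_mulVec_le (hA : A.IsHermitian) (x : n → ℝ) :
    x ⬝ᵥ (A *ᵥ x) ≤ sSup (spectrum ℝ A) * (x ⬝ᵥ x) := by
  have := hA.dotProduct_aeval_mulVec_nonneg (q := C (sSup (spectrum ℝ A)) - X)
    (fun t ht => by simpa using le_sSup_real_spectrum ht) x
  simpa [sub_mulVec, Algebra.algebraMap_eq_smul_one, smul_mulVec] using this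

theorem IsHermitian.neg_sSup_spectrum_le (hA : A.IsHermitian) (hA₀ : ∀ i j, 0 ≤ A i j)
    {μ : ℝ} (hμ : μ ∈ spectrum ℝ A) : -sSup (spectrum ℝ A) ≤ μ := by
  obtain ⟨x, hx, hAx⟩ := mem_spectrum_iff_exists_mulVec_eq_smul_s18.mp hμ
  have hxx : 0 < x ⬝ᵥ x := by simpa using dotProduct_self_star_pos_iff.mpr hx
  have habs : |x| ⬝ᵥ |x| = x ⬝ᵥ x := by simp [dotProduct, abs_mul_abs_self]
  have := (neg_dotProduct_mulVec_le_abs hA₀ x).trans (hA.dotProduct_mulVec_le |x|)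
  rw [hAx, dotProduct_smul, smul_eq_mul, habs] at this
  nlinarith

theorem IsHermitian.sSup_spectrum_nonneg (hA : A.IsHermitian) (hA₀ : ∀ i j, 0 ≤ A i j) :
    0 ≤ sSup (spectrum ℝ A) := by
  rcases (spectrum ℝ A).eq_empty_or_nonempty with h | ⟨μ, hμ⟩
  · simp [h] -- `sSup ∅ = 0`
  · linarith [hA.neg_sSup_spectrum_le hA₀ hμ, le_sSup_real_spectrum hμ]

theorem IsHermitian.mul_cubic_le_of_smul_sub_mulVec (hA : A.IsHermitian)
    (hA₀ : ∀ i j, 0 ≤ A i j) {l c : ℝ} (hl : sSup (spectrum ℝ A) < l) {y b : n → ℝ}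
    (hy : l • y - A *ᵥ y = c • b) (hc : l * c = b ⬝ᵥ y) :
    c ^ 2 * (l * (l ^ 2 - sSup (spectrum ℝ A) ^ 2)) ≤
      c ^ 2 * (l * (b ⬝ᵥ b) + b ⬝ᵥ (A *ᵥ b)) := by
  set a := sSup (spectrum ℝ A)
  set P : Matrix n n ℝ := l • 1 - A
  have hPt : Pᵀ = P := by simp [P, (isHermitian_iff_isSymm.mp hA).eq]
  have hPy : P *ᵥ y = c • b := by simpa [P, sub_mulVec, smul_mulVec] using hy
  have hq := hA.dotProduct_aeval_mulVec_nonneg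
    (q := (C l - X) * (C l + X) * (C l - X) - C (l ^ 2 - a ^ 2) * (C l - X))
    (fun t ht => by
      have h₁ := le_sSup_real_spectrum ht
      have h₂ := hA.neg_sSup_spectrum_le hA₀ ht
      have : 0 ≤ (l - t) * ((a - t) * (a + t)) :=
        mul_nonneg (by linarith) (mul_nonneg (by linarith) (by linarith))
      simp only [eval_sub, eval_mul, eval_add, eval_C, eval_X]
      linarith)
    y
  have hq' : aeval A ((C l - X) * (C l + X) * (C l - X) - C (l ^ 2 - a ^ 2) * (C l - X)) =
      P * (l • 1 + A) * P - (l ^ 2 - a ^ 2) • P := by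
    simp only [map_sub, map_mul, map_add, aeval_C, aeval_X, Algebra.algebraMap_eq_smul_one, P]
    rw [← sub_smul, smul_one_mul]
  have hPRP :
      y ⬝ᵥ ((P * (l • 1 + A) * P) *ᵥ y) = c ^ 2 * (l * (b ⬝ᵥ b) + b ⬝ᵥ (A *ᵥ b)) := by
    rw [← mulVec_mulVec, ← mulVec_mulVec, dotProduct_mulVec y P, ← mulVec_transpose, hPt, hPy]
    simp only [add_mulVec, smul_mulVec, one_mulVec, mulVec_smul, dotProduct_add, dotProduct_smul,
      smul_dotProduct, smul_eq_mul]
    ring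
  have hPy' : y ⬝ᵥ (P *ᵥ y) = l * c ^ 2 := by
    rw [hPy, dotProduct_smul, smul_eq_mul, dotProduct_comm, ← hc]
    ring
  rw [hq', sub_mulVec, dotProduct_sub, smul_mulVec, dotProduct_smul, smul_eq_mul, hPRP, hPy']
    at hq
  linear_combination hq

end Hermitian

namespace IsAdjMatrix

variable {V : Type*} {A : Matrix V V ℝ}

theorem nonneg (hA : A.IsAdjMatrix) (i j : V) : 0 ≤ A i j := by
  rcases hA.zero_or_one i j with h | h <;> simp [h]

theorem le_one (hA : A.IsAdjMatrix) (i j : V) : A i j ≤ 1 := by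
  rcases hA.zero_or_one i j with h | h <;> simp [h]

theorem mul_self_apply (hA : A.IsAdjMatrix) (i j : V) : A i j * A i j = A i j := by
  rcases hA.zero_or_one i j with h | h <;> simp [h]

theorem sSup_spectrum_sq_le [Fintype V] [DecidableEq V] (hA : A.IsAdjMatrix) (v : V)
    (hd : 1 ≤ ∑ w, A v w) :
    sSup (spectrum ℝ A) ^ 2 ≤
      sSup (spectrum ℝ (A.submatrix (Subtype.val : {w // w ≠ v} → V)
        (Subtype.val : {w // w ≠ v} → V))) ^ 2 +
        2 * ∑ w, A v w - 1 := by
  set A' := A.submatrix (Subtype.val : {w // w ≠ v} → V) (Subtype.val : {w // w ≠ v} → V)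
  have hA' : A'.IsAdjMatrix := hA.submatrix _
  set l := sSup (spectrum ℝ A)
  set a := sSup (spectrum ℝ A')
  set d := ∑ w, A v w
  have ha : 0 ≤ a := hA'.isHermitian.sSup_spectrum_nonneg hA'.nonneg
  rcases le_or_gt l a with hla | hal
  · nlinarith [hA.isHermitian.sSup_spectrum_nonneg hA.nonneg]
  have : Nonempty V := ⟨v⟩
  obtain ⟨x, hx, hAx⟩ :=
    mem_spectrum_iff_exists_mulVec_eq_smul_s18.mp hA.isHermitian.sSup_spectrum_mem
  set y : {w // w ≠ v} → ℝ := fun w => x w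
  set b : {w // w ≠ v} → ℝ := fun w => A v w
  have hc := mul_apply_eq_dotProduct_of_mulVec_eq_smul hAx (hA.apply_diag v)
  have hy := smul_sub_submatrix_mulVec_of_mulVec_eq_smul hA.symm hAx v
  have hbsum : ∑ w, b w = d := by
    simp [d, Fintype.sum_eq_add_sum_subtype_ne _ v, hA.apply_diag v, b]
  have hbb : b ⬝ᵥ b = d := by
    simp only [dotProduct, b, hA.mul_self_apply]
    exact hbsum
  have hxv : x v ≠ 0 := by
    intro hxv
    obtain ⟨i, hi⟩ := Function.ne_iff.mp hx
    have hiv : i ≠ v := by rintro rfl; exact hi hxv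
    have hy0 : y ≠ 0 := Function.ne_iff.mpr ⟨⟨i, hiv⟩, hi⟩
    have hl : l ∈ spectrum ℝ A' := mem_spectrum_iff_exists_mulVec_eq_smul_s18.mpr
      ⟨y, hy0, by rwa [hxv, zero_smul, sub_eq_zero, eq_comm] at hy⟩
    exact (le_sSup_real_spectrum hl).not_gt hal
  have key := hA'.isHermitian.mul_cubic_le_of_smul_sub_mulVec hA'.nonneg hal hy hc
  rw [hbb] at key
  refine sq_le_sq_add_two_mul_sub_one_of_cubic_le hd ha hal ?_ ?_
    (le_of_mul_le_mul_left key (by positivity))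
  · simpa [hbb] using hA'.isHermitian.dotProduct_mulVec_le b
  · have := dotProduct_mulVec_le_sq_sum_sub hA'.le_one hA'.apply_diag (b := b)
      (fun w => hA.nonneg v w)
    rw [hbsum, hbb] at this
    linarith

end IsAdjMatrix

end Matrix

theorem specRad_eq_sSup_spectrum {V : Type*} [Fintype V] [DecidableEq V] (G : SimpleGraph V)
    [DecidableRel G.Adj] : specRad G = sSup (spectrum ℝ (G.adjMatrix ℝ)) := by
  unfold specRad
  congr!

/-- Sun–Das inequality: deleting a vertex `v` of degree `≥ 1` satisfies
`λ(G)² ≤ λ(G − v)² + 2·deg(v) − 1`. -/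
theorem stmt_18 {V : Type*} [Fintype V] [DecidableEq V] (G : SimpleGraph V) (v : V)
    (hd : 1 ≤ (G.neighborSet v).ncard) :
    (specRad G) ^ 2 ≤
      (specRad (G.comap (Subtype.val : {w : V // w ≠ v} → V))) ^ 2 +
        2 * ((G.neighborSet v).ncard : ℝ) - 1 := by
  classical
  have hdeg : ((G.neighborSet v).ncard : ℝ) = ∑ w, G.adjMatrix ℝ v w := by
    rw [Set.ncard_eq_toFinset_card', ← G.neighborFinset_def, G.card_neighborFinset_eq_degree]
    have := G.adjMatrix_mulVec_const_apply (a := (1 : ℝ)) (v := v)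
    simpa [mulVec, dotProduct] using this.symm
  have hsub : (G.comap (Subtype.val : {w : V // w ≠ v} → V)).adjMatrix ℝ =
      (G.adjMatrix ℝ).submatrix Subtype.val Subtype.val := by
    ext i j
    simp [SimpleGraph.adjMatrix_apply]
  rw [specRad_eq_sSup_spectrum, specRad_eq_sSup_spectrum, hsub, hdeg]
  exact (G.isAdjMatrix_adjMatrix ℝ).sSup_spectrum_sq_le v (by rw [← hdeg]; exact_mod_cast hd)
end

section
/- For real p ≥ 2 and integers k ≥ 6 even and n ≥ 2k, we have (k/2 − 1)(n−1)^p + (n − k/2 + 1)(k/2 − 1)^p > (n − k + 2) + (n−1)^p + (k−3)^{p+1}. -/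
/-- For real `p ≥ 2`, even `k ≥ 6` and `n ≥ 2k`:
`(k/2 − 1)(n−1)^p + (n − k/2 + 1)(k/2 − 1)^p > (n − k + 2) + (n−1)^p + (k−3)^{p+1}`,
comparing the degree power sums of `W_{n,k−1,k/2−1}` and `W_{n,k−1,1}`. -/
theorem stmt_19 (p : ℝ) (hp : 2 ≤ p) (k n : ℕ) (hke : Even k) (hk : 6 ≤ k)
    (hn : 2 * k ≤ n) :
    ((n : ℝ) - k + 2) + ((n : ℝ) - 1) ^ p + ((k : ℝ) - 3) ^ (p + 1) <
      ((k : ℝ) / 2 - 1) * ((n : ℝ) - 1) ^ p +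
        ((n : ℝ) - (k : ℝ) / 2 + 1) * ((k : ℝ) / 2 - 1) ^ p := by
  set K := (k : ℝ) with hKdef
  set N := (n : ℝ) with hNdef
  have hK : (6:ℝ) ≤ K := by rw [hKdef]; exact_mod_cast hk
  have hN : 2 * K ≤ N := by rw [hKdef, hNdef]; exact_mod_cast hn
  have hp0 : (0:ℝ) ≤ p := by linarith
  have hN1 : (0:ℝ) < N - 1 := by linarith
  have hK3 : (0:ℝ) < K - 3 := by linarith
  have h2p : (4:ℝ) ≤ (2:ℝ) ^ p := by
    have h := Real.rpow_le_rpow_of_exponent_le (by norm_num : (1:ℝ) ≤ 2)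
      (show (((2:ℕ):ℝ)) ≤ p by push_cast; linarith)
    rw [Real.rpow_natCast] at h
    norm_num at h
    exact h
  have hNp : (0:ℝ) < (N-1) ^ p := Real.rpow_pos_of_pos hN1 p
  have h2pp : (0:ℝ) < (2:ℝ) ^ p := Real.rpow_pos_of_pos (by norm_num) p
  have hA1 : (K-3) ^ p ≤ ((N-1)/2) ^ p :=
    Real.rpow_le_rpow (le_of_lt hK3) (by linarith) hp0
  have hA2 : ((N-1)/2) ^ p = (N-1) ^ p / 2 ^ p :=
    Real.div_rpow (le_of_lt hN1) (by norm_num : (0:ℝ) ≤ 2) p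
  have hA : (K-3) ^ (p+1) < (K/2 - 2) * (N-1) ^ p := by
    rw [Real.rpow_add_one (ne_of_gt hK3)]
    have h1 : (K-3) ^ p * (K-3) ≤ (N-1) ^ p / 2 ^ p * (K-3) := by
      apply mul_le_mul_of_nonneg_right _ (le_of_lt hK3)
      rw [← hA2]; exact hA1
    have h2 : (N-1) ^ p / 2 ^ p * (K-3) < (K/2 - 2) * (N-1) ^ p := by
      rw [div_mul_eq_mul_div, div_lt_iff₀ h2pp]
      have hx : (K-3) < (K/2 - 2) * 2 ^ p := by nlinarith [h2p]
      nlinarith [hNp]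
    linarith
  have hmp : (1:ℝ) ≤ (K/2 - 1) ^ p := by
    have h := Real.rpow_le_rpow (by norm_num : (0:ℝ) ≤ 1) (by linarith : (1:ℝ) ≤ K/2 - 1) hp0
    rwa [Real.one_rpow] at h
  have hB : (N - K + 2) ≤ (N - K/2 + 1) * (K/2 - 1) ^ p := by
    nlinarith [hmp, hK, hN]
  have hsplit : (K/2 - 1) * (N-1) ^ p = (N-1) ^ p + (K/2 - 2) * (N-1) ^ p := by ring
  linarith
end
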